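/- arXiv:2104.01573 — 5 statements merged into one kernel-verified Lean document; each statement's English description precedes it below -/
import Mathlib

section
/- Fix real numbers 0 < z2 < z3. The function h(z1) = z1*z2*log(z2/z1) - z1*z3*log(z3/z1) + z2*z3*log(z3/z2) is strictly decreasing in z1 on the interval (0, z2), and h(z2) = 0; consequently h(z1) > 0 for all z1 in (0, z2). -/
/-!
Since `y ↦ y * log (c / y)` has derivative `log (c / y) - 1`, the derivative of `h` at `z1` is
`z2 * (log (z2 / z1) - 1) - z3 * (log (z3 / z1) - 1)`. Splitting `log (z3 / z1)` as
`log (z3 / z2) + log (z2 / z1)`, this is `-(z3 - z2) log (z2 / z1) + (z3 - z2) - z3 log (z3 / z2)`,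
which is negative for `z1 < z2` because `log (z3 / z2) ≥ 1 - z2 / z3`. So `h` decreases strictly
on `(0, z2]` down to `h z2 = 0`.
-/

open Real Set

lemma hasDerivAt_mul_log_div {c x : ℝ} (hc : c ≠ 0) (hx : x ≠ 0) :
    HasDerivAt (fun y => y * log (c / y)) (log (c / x) - 1) x := by
  have hlog : HasDerivAt (fun y => log (c / y)) (-x⁻¹) x := by
    have := ((hasDerivAt_inv hx).const_mul c).log (mul_ne_zero hc (inv_ne_zero hx))
    simp only [← div_eq_mul_inv] at this
    convert this using 1
    field_simp
  refine ((hasDerivAt_id' x).mul hlog).congr_deriv ?_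
  field_simp
  ring

lemma mul_log_div_sub_mul_log_div_neg {a b x : ℝ} (hx : 0 < x) (hxa : x < a) (hab : a < b) :
    a * (log (a / x) - 1) - b * (log (b / x) - 1) < 0 := by
  have ha : 0 < a := hx.trans hxa
  have hb : 0 < b := ha.trans hab
  have hsplit : log (b / x) = log (b / a) + log (a / x) := by
    rw [← log_mul (by positivity) (by positivity), div_mul_div_cancel₀ ha.ne']
  have hax : 0 < log (a / x) := log_pos ((one_lt_div hx).2 hxa)
  have hba : b - a ≤ b * log (b / a) := by
    have := one_sub_inv_le_log_of_pos (div_pos hb ha)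
    rw [inv_div] at this
    calc b - a = b * (1 - a / b) := by field_simp
      _ ≤ b * log (b / a) := by gcongr
  rw [hsplit]
  nlinarith [mul_pos (sub_pos.2 hab) hax]

theorem stmt_7 (z2 z3 : ℝ) (hz2 : 0 < z2) (hz23 : z2 < z3) :
    StrictAntiOn
      (fun z1 : ℝ => z1 * z2 * Real.log (z2 / z1) - z1 * z3 * Real.log (z3 / z1)
        + z2 * z3 * Real.log (z3 / z2)) (Set.Ioo 0 z2)
    ∧ (z2 * z2 * Real.log (z2 / z2) - z2 * z3 * Real.log (z3 / z2)
        + z2 * z3 * Real.log (z3 / z2) = 0)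
    ∧ ∀ z1 ∈ Set.Ioo 0 z2,
        z1 * z2 * Real.log (z2 / z1) - z1 * z3 * Real.log (z3 / z1)
          + z2 * z3 * Real.log (z3 / z2) > 0 := by
  set h : ℝ → ℝ := fun z1 => z1 * z2 * log (z2 / z1) - z1 * z3 * log (z3 / z1)
    + z2 * z3 * log (z3 / z2) with h_def
  have hderiv : ∀ x ∈ Ioi (0 : ℝ),
      HasDerivAt h (z2 * (log (z2 / x) - 1) - z3 * (log (z3 / x) - 1)) x := fun x hx => by
    have h2 := (hasDerivAt_mul_log_div hz2.ne' (ne_of_gt hx)).const_mul z2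
    have h3 := (hasDerivAt_mul_log_div (hz2.trans hz23).ne' (ne_of_gt hx)).const_mul z3
    refine ((h2.sub h3).add_const (z2 * z3 * log (z3 / z2))).congr_of_eventuallyEq
      (.of_forall fun y => ?_)
    simp only [h_def, Pi.sub_apply]
    ring
  have hanti : StrictAntiOn h (Ioc 0 z2) := by
    refine strictAntiOn_of_hasDerivWithinAt_neg (convex_Ioc 0 z2)
      (f' := fun x => z2 * (log (z2 / x) - 1) - z3 * (log (z3 / x) - 1))
      (fun x hx => (hderiv x hx.1).continuousAt.continuousWithinAt)
      (fun x hx => ?_) (fun x hx => ?_) <;> rw [interior_Ioc] at hx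
    · exact (hderiv x hx.1).hasDerivWithinAt
    · exact mul_log_div_sub_mul_log_div_neg hx.1 hx.2 hz23
  have hzero : h z2 = 0 := by simp [h_def]
  refine ⟨hanti.mono Ioo_subset_Ioc_self, hzero, fun x hx => ?_⟩
  exact hzero ▸ hanti (Ioo_subset_Ioc_self hx) (right_mem_Ioc.2 hz2) hx.2
end

section
/- Fix real numbers 0 < z1 < z2. Define h(z3) = z1*z2*log(z2/z1) - z1*z3*log(z3/z1) + z2*z3*log(z3/z2) for z3 > z2. Then h(z3) > 0 for all z3 in (z2, ∞). -/
theorem stmt_8 (z1 z2 : ℝ) (hz1 : 0 < z1) (hz12 : z1 < z2) (z3 : ℝ) (hz3 : z2 < z3) :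
    z1 * z2 * Real.log (z2 / z1) - z1 * z3 * Real.log (z3 / z1)
      + z2 * z3 * Real.log (z3 / z2) > 0 := by
  have hz2 : (0:ℝ) < z2 := lt_trans hz1 hz12
  have hz3' : (0:ℝ) < z3 := lt_trans hz2 hz3
  have hsplit : Real.log (z3 / z1) = Real.log (z3 / z2) + Real.log (z2 / z1) := by
    rw [← Real.log_mul (by positivity) (by positivity)]
    congr 1
    field_simp
  have hA : z1 * Real.log (z2 / z1) < z2 - z1 := by
    have := Real.log_lt_sub_one_of_pos (x := z2 / z1) (by positivity)
      (by intro h; field_simp at h; linarith)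
    have h2 : z1 * Real.log (z2 / z1) < z1 * (z2 / z1 - 1) := by
      exact (mul_lt_mul_iff_right₀ hz1).mpr this
    have : z1 * (z2 / z1 - 1) = z2 - z1 := by field_simp
    linarith
  have hB : z3 - z2 < z3 * Real.log (z3 / z2) := by
    have := Real.log_lt_sub_one_of_pos (x := z2 / z3) (by positivity)
      (by intro h; field_simp at h; linarith)
    have hneg : Real.log (z2 / z3) = -Real.log (z3 / z2) := by
      rw [← Real.log_inv]; congr 1; field_simp
    rw [hneg] at this
    have h2 : z3 * (-Real.log (z3 / z2)) < z3 * (z2 / z3 - 1) :=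
      (mul_lt_mul_iff_right₀ hz3').mpr this
    have h3 : z3 * (z2 / z3 - 1) = z2 - z3 := by field_simp
    nlinarith
  rw [hsplit]
  nlinarith [mul_pos (sub_pos.mpr hz12) (sub_pos.mpr hz3), sub_pos.mpr hz12, sub_pos.mpr hz3]
end

section
/- Fix 0 < z1 < z3. The function h(z2) = z1*z2*log(z2/z1) - z1*z3*log(z3/z1) + z2*z3*log(z3/z2) vanishes at z2 = z1 and z2 = z3, is strictly increasing on (z1, z2^0) and strictly decreasing on (z2^0, z3), where log(z2^0) = [z3*log(z3) - z1*log(z1)]/(z3 - z1) - 1; consequently h(z2) > 0 for all z2 in the open interval (z1, z3). -/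
/-!
For `z2 > 0` the logarithms split and `h` becomes affine in `z2 * log z2`:
`h z2 = (z3 log z3 - z1 log z1) z2 - (z3 - z1) z2 log z2 - const`.
Hence `h' z2 = (z3 - z1) (log z2^0 - log z2)`, which is positive below `z2^0` and negative
above it. A function that rises and then falls is larger inside an interval than at both ends,
and `h` vanishes at the ends `z1` and `z3`.
-/

open Real Set

noncomputable section

def logGap (z1 z3 z2 : ℝ) : ℝ :=
  z1 * z2 * log (z2 / z1) - z1 * z3 * log (z3 / z1) + z2 * z3 * log (z3 / z2)

lemma logGap_left (z1 z3 : ℝ) (hz1 : z1 ≠ 0) : logGap z1 z3 z1 = 0 := by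
  simp only [logGap, div_self hz1, log_one]; ring

lemma logGap_right (z1 z3 : ℝ) (hz3 : z3 ≠ 0) : logGap z1 z3 z3 = 0 := by
  simp only [logGap, div_self hz3, log_one]; ring

lemma logGap_eq {z1 z3 z2 : ℝ} (hz1 : z1 ≠ 0) (hz3 : z3 ≠ 0) (hz2 : z2 ≠ 0) :
    logGap z1 z3 z2 = (z3 * log z3 - z1 * log z1) * z2 - (z3 - z1) * (z2 * log z2)
      - z1 * z3 * log (z3 / z1) := by
  rw [logGap, log_div hz2 hz1, log_div hz3 hz2]; ring

lemma hasDerivAt_logGap {z1 z3 x : ℝ} (hz1 : z1 ≠ 0) (hz3 : z3 ≠ 0) (hz13 : z1 ≠ z3)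
    (hx : x ≠ 0) :
    HasDerivAt (logGap z1 z3)
      ((z3 - z1) * (log (exp ((z3 * log z3 - z1 * log z1) / (z3 - z1) - 1)) - log x)) x := by
  have hk : z3 - z1 ≠ 0 := sub_ne_zero.2 hz13.symm
  have hmodel := (((hasDerivAt_id' x).const_mul (z3 * log z3 - z1 * log z1)).sub
    ((hasDerivAt_mul_log hx).const_mul (z3 - z1))).sub_const (z1 * z3 * log (z3 / z1))
  have hnear : logGap z1 z3 =ᶠ[nhds x] fun y => (z3 * log z3 - z1 * log z1) * y
      - (z3 - z1) * (y * log y) - z1 * z3 * log (z3 / z1) :=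
    Filter.eventually_of_mem (isOpen_ne.mem_nhds hx) fun y hy => logGap_eq hz1 hz3 hy
  refine (hmodel.congr_of_eventuallyEq hnear).congr_deriv ?_
  rw [log_exp]
  field_simp
  ring

section LogDerivative

variable {f : ℝ → ℝ} {k c : ℝ}

lemma strictMonoOn_Ioc_of_hasDerivAt_mul_log_sub (hk : 0 < k)
    (hf : ∀ x, 0 < x → HasDerivAt f (k * (log c - log x)) x) : StrictMonoOn f (Ioc 0 c) := by
  refine strictMonoOn_of_deriv_pos (convex_Ioc 0 c)
    (fun x hx => (hf x hx.1).continuousAt.continuousWithinAt) fun x hx => ?_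
  rw [interior_Ioc] at hx
  rw [(hf x hx.1).deriv]
  exact mul_pos hk (sub_pos.2 (log_lt_log hx.1 hx.2))

lemma strictAntiOn_Ici_of_hasDerivAt_mul_log_sub (hk : 0 < k) (hc : 0 < c)
    (hf : ∀ x, 0 < x → HasDerivAt f (k * (log c - log x)) x) : StrictAntiOn f (Ici c) := by
  refine strictAntiOn_of_deriv_neg (convex_Ici c)
    (fun x hx => (hf x (hc.trans_le hx)).continuousAt.continuousWithinAt) fun x hx => ?_
  rw [interior_Ici] at hx
  rw [(hf x (hc.trans hx)).deriv]
  exact mul_neg_of_pos_of_neg hk (sub_neg.2 (log_lt_log hc hx))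

end LogDerivative

lemma min_lt_of_strictMonoOn_Icc_of_strictAntiOn_Icc {f : ℝ → ℝ} {a b c x : ℝ}
    (hmono : StrictMonoOn f (Icc a c)) (hanti : StrictAntiOn f (Icc c b)) (hx : x ∈ Ioo a b) :
    min (f a) (f b) < f x := by
  rcases le_or_gt x c with hxc | hcx
  · exact (min_le_left _ _).trans_lt
      (hmono ⟨le_rfl, hx.1.le.trans hxc⟩ ⟨hx.1.le, hxc⟩ hx.1)
  · exact (min_le_right _ _).trans_lt
      (hanti ⟨hcx.le, hx.2.le⟩ ⟨hcx.le.trans hx.2.le, le_rfl⟩ hx.2)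

end

theorem stmt_12 (z1 z3 : ℝ) (hz1 : 0 < z1) (hz13 : z1 < z3) :
    let h : ℝ → ℝ := fun z2 => z1 * z2 * Real.log (z2 / z1) - z1 * z3 * Real.log (z3 / z1)
      + z2 * z3 * Real.log (z3 / z2)
    let z20 : ℝ := Real.exp ((z3 * Real.log z3 - z1 * Real.log z1) / (z3 - z1) - 1)
    h z1 = 0 ∧ h z3 = 0 ∧ StrictMonoOn h (Set.Ioo z1 z20) ∧ StrictAntiOn h (Set.Ioo z20 z3)
      ∧ ∀ z2 ∈ Set.Ioo z1 z3, h z2 > 0 := by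
  intro h z20
  change logGap z1 z3 z1 = 0 ∧ logGap z1 z3 z3 = 0 ∧ StrictMonoOn (logGap z1 z3) (Ioo z1 z20)
    ∧ StrictAntiOn (logGap z1 z3) (Ioo z20 z3) ∧ ∀ z2 ∈ Ioo z1 z3, logGap z1 z3 z2 > 0
  have hz3 : 0 < z3 := hz1.trans hz13
  have hderiv (x : ℝ) (hx : 0 < x) := hasDerivAt_logGap hz1.ne' hz3.ne' hz13.ne hx.ne'
  have hmono := strictMonoOn_Ioc_of_hasDerivAt_mul_log_sub (sub_pos.2 hz13) hderiv
  have hanti := strictAntiOn_Ici_of_hasDerivAt_mul_log_sub (sub_pos.2 hz13) (exp_pos _) hderiv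
  have hleft := logGap_left z1 z3 hz1.ne'
  have hright := logGap_right z1 z3 hz3.ne'
  refine ⟨hleft, hright, hmono.mono fun x hx => ⟨hz1.trans hx.1, hx.2.le⟩,
    hanti.mono fun x hx => hx.1.le, fun z2 hz2 => ?_⟩
  have := min_lt_of_strictMonoOn_Icc_of_strictAntiOn_Icc
    (hmono.mono fun x hx => ⟨hz1.trans_le hx.1, hx.2⟩) (hanti.mono fun x hx => hx.1) hz2
  rwa [hleft, hright, min_self] at this
end

section
/- Let β1 > 0, β2 > 0, β3 > 0, U > 0. Any solution x2 in (0, U) of the equation (β1 + β2*x2^{β3})*(β3*log(U/x2) - 2) + β1*β3*log(U/x2) = 0 satisfies U*exp(-2/β3) ≤ x2 ≤ U*exp(-1/β3). -/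
theorem stmt_16 (β1 β2 β3 U : ℝ) (hβ1 : 0 < β1) (hβ2 : 0 < β2) (hβ3 : 0 < β3) (hU : 0 < U)
    (x2 : ℝ) (hx2 : x2 ∈ Set.Ioo 0 U)
    (heq : (β1 + β2 * x2 ^ β3) * (β3 * Real.log (U / x2) - 2)
      + β1 * β3 * Real.log (U / x2) = 0) :
    U * Real.exp (-2 / β3) ≤ x2 ∧ x2 ≤ U * Real.exp (-1 / β3) := by
  obtain ⟨hx0, hxU⟩ := hx2
  set L := Real.log (U / x2) with hL
  have hA : 0 < β2 * x2 ^ β3 := mul_pos hβ2 (Real.rpow_pos_of_pos hx0 β3)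
  have hge : 1 ≤ β3 * L := by nlinarith
  have hle : β3 * L ≤ 2 := by nlinarith
  have hux : 0 < U / x2 := div_pos hU hx0
  constructor
  · have h1 : L ≤ 2 / β3 := by rw [le_div_iff₀ hβ3]; linarith [mul_comm β3 L]
    have h2 : U / x2 ≤ Real.exp (2 / β3) := by
      rw [← Real.exp_log hux]; exact Real.exp_le_exp.mpr h1
    rw [div_le_iff₀ hx0] at h2
    have he := Real.exp_pos (2 / β3)
    have hinv : Real.exp (2 / β3) * (Real.exp (2 / β3))⁻¹ = 1 := mul_inv_cancel₀ he.ne'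
    have hinvpos : 0 < (Real.exp (2 / β3))⁻¹ := inv_pos.mpr he
    rw [neg_div, Real.exp_neg]
    nlinarith
  · have h1 : 1 / β3 ≤ L := by rw [div_le_iff₀ hβ3]; linarith [mul_comm β3 L]
    have h2 : Real.exp (1 / β3) ≤ U / x2 := by
      rw [← Real.exp_log hux]; exact Real.exp_le_exp.mpr h1
    rw [le_div_iff₀ hx0] at h2
    have he := Real.exp_pos (1 / β3)
    have hinv : Real.exp (1 / β3) * (Real.exp (1 / β3))⁻¹ = 1 := mul_inv_cancel₀ he.ne'
    have hinvpos : 0 < (Real.exp (1 / β3))⁻¹ := inv_pos.mpr he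
    rw [neg_div, Real.exp_neg]
    nlinarith
end

section
/- Let β1 > 0, β2 > 0, β3 > 0 and fix x3 > x2 > 0. Any solution x2 of the equation β3*(β2*x2^{β3} - 2*β1)*log(x3/x2) + 2*(β1 + β2*x2^{β3}) = 0 satisfies 0 < x2 < (2*β1/β2)^{1/β3}. -/
theorem stmt_17 (β1 β2 β3 : ℝ) (hβ1 : 0 < β1) (hβ2 : 0 < β2) (hβ3 : 0 < β3)
    (x2 x3 : ℝ) (hx2 : 0 < x2) (hx23 : x2 < x3)
    (heq : β3 * (β2 * x2 ^ β3 - 2 * β1) * Real.log (x3 / x2)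
      + 2 * (β1 + β2 * x2 ^ β3) = 0) :
    0 < x2 ∧ x2 < (2 * β1 / β2) ^ (1 / β3) := by
  refine ⟨hx2, ?_⟩
  have hL : 0 < Real.log (x3 / x2) := Real.log_pos ((one_lt_div hx2).2 hx23)
  have hp : (0:ℝ) < x2 ^ β3 := Real.rpow_pos_of_pos hx2 β3
  have hfac : β2 * x2 ^ β3 - 2 * β1 < 0 := by
    by_contra h; push_neg at h
    nlinarith [mul_nonneg (mul_nonneg hβ3.le h) hL.le]
  have hlt : x2 ^ β3 < 2 * β1 / β2 := by
    rw [lt_div_iff₀ hβ2]; nlinarith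
  have := Real.rpow_lt_rpow (le_of_lt hp) hlt (by positivity : (0:ℝ) < 1/β3)
  rwa [one_div, Real.rpow_rpow_inv (le_of_lt hx2) (ne_of_gt hβ3), ← one_div] at this
end
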